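/- arXiv:1405.5922 — 2 statements merged into one kernel-verified Lean document; each statement's English description precedes it below -/
import Mathlib

section
/- Let Λ be a row-finite k-graph with no sources and let E be its diagonal 1-graph (edges are paths of degree p = (1,…,1)). Then the map i : Λ^∞ → E^∞ determined by α(i(x)(j,l)) = x(jp, lp) is a bijection, and its inverse i⁻¹ : E^∞ → Λ^∞ is continuous. -/
/-- A `k`-graph: a small category `(V, E, r, s, comp, vId)` together with a degree functor
`deg : E → ℕᵏ` satisfying the unique factorization property.  `comp l m h` is the
composition `lm` (defined when `s l = r m`), with `r (lm) = r l`, `s (lm) = s m`. -/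
structure KGraph (k : ℕ) where
  V : Type
  E : Type
  r : E → V
  s : E → V
  comp : (l m : E) → s l = r m → E
  vId : V → E
  deg : E → Fin k → ℕ
  r_comp : ∀ (l m : E) (h : s l = r m), r (comp l m h) = r l
  s_comp : ∀ (l m : E) (h : s l = r m), s (comp l m h) = s m
  deg_comp : ∀ (l m : E) (h : s l = r m), deg (comp l m h) = deg l + deg m
  r_vId : ∀ v, r (vId v) = v
  s_vId : ∀ v, s (vId v) = v
  deg_vId : ∀ v, deg (vId v) = 0
  id_comp : ∀ (l : E) (h : s (vId (r l)) = r l), comp (vId (r l)) l h = l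
  comp_id : ∀ (l : E) (h : s l = r (vId (s l))), comp l (vId (s l)) h = l
  comp_assoc : ∀ (l m n : E) (h1 : s l = r m) (h2 : s m = r n)
    (h3 : s (comp l m h1) = r n) (h4 : s l = r (comp m n h2)),
    comp (comp l m h1) n h3 = comp l (comp m n h2) h4
  factor : ∀ (l : E) (p q : Fin k → ℕ), deg l = p + q →
    ∃! mn : E × E, ∃ h : s mn.1 = r mn.2,
      comp mn.1 mn.2 h = l ∧ deg mn.1 = p ∧ deg mn.2 = q

namespace KGraph

variable {k : ℕ} (G : KGraph k)

/-- `Λ` is row-finite: each `vΛⁿ` is finite. -/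
def RowFinite : Prop := ∀ (v : G.V) (n : Fin k → ℕ), {l : G.E | G.r l = v ∧ G.deg l = n}.Finite

/-- `Λ` has no sources: each `vΛⁿ` is nonempty. -/
def NoSources : Prop := ∀ (v : G.V) (n : Fin k → ℕ), ∃ l : G.E, G.r l = v ∧ G.deg l = n

/-- An infinite path in a `k`-graph, recorded by its initial segments `seg n = x(0,n)`:
`deg (seg n) = n` and `seg n` extends to `seg (n + m)`. -/
structure InfPath where
  seg : (Fin k → ℕ) → G.E
  deg_seg : ∀ n, G.deg (seg n) = n
  compat : ∀ n m : Fin k → ℕ, ∃ (μ : G.E) (h : G.s (seg n) = G.r μ),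
    G.comp (seg n) μ h = seg (n + m)

/-- The cylinder-set topology on the infinite path space `Λ^∞`, generated by the sets
`Z(λ) = {x : x(0, d λ) = λ}`. -/
def infPathTop : TopologicalSpace G.InfPath :=
  TopologicalSpace.generateFrom {S | ∃ l : G.E, S = {x : G.InfPath | x.seg (G.deg l) = l}}

/-- An infinite path of the diagonal `1`-graph `E` of `Λ`: a composable sequence of
edges, i.e. of morphisms of degree `p = (1,…,1)`. -/
structure DiagSeq where
  edge : ℕ → G.E
  deg_edge : ∀ n, G.deg (edge n) = fun _ => 1
  comp_edge : ∀ n, G.s (edge n) = G.r (edge (n + 1))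

/-- The cylinder-set topology on the infinite path space `E^∞` of the diagonal `1`-graph,
generated by the sets of paths with a prescribed initial segment of edges. -/
def diagTop : TopologicalSpace G.DiagSeq :=
  TopologicalSpace.generateFrom
    {S | ∃ (n : ℕ) (w : ℕ → G.E), S = {z : G.DiagSeq | ∀ i < n, z.edge i = w i}}

/-- `Prepend l x y` expresses that `y = λ x` in `Λ^∞`:
`y(0, d(λ)+n) = λ · x(0,n)` for all `n`. -/
def Prepend (l : G.E) (x y : G.InfPath) : Prop :=
  ∀ n : Fin k → ℕ, ∃ h : G.s l = G.r (x.seg n),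
    G.comp l (x.seg n) h = y.seg (G.deg l + n)

end KGraph

/-!
A diagonal path `z ∈ E^∞` gives the composable chain `z₀ z₁ ⋯ z_{m-1}` of degree `(m,…,m)`
for every `m`. For `n ∈ ℕᵏ` choose `m ≥ max n`; unique factorization splits this chain as
`λ ν` with `d(λ) = n`, and `λ` does not depend on `m` because the chains for `m ≤ m'` are
initial segments of each other. These `λ` form an infinite path, which is the preimage of
`z`; its degree-`n` segment depends only on the first `max n + 1` edges of `z`, hence
continuity.
-/

namespace KGraph

variable {k : ℕ} {G : KGraph k}

theorem comp_congr {a a' b b' : G.E} (ha : a = a') (hb : b = b')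
    (h : G.s a = G.r b) (h' : G.s a' = G.r b') :
    G.comp a b h = G.comp a' b' h' := by
  subst ha hb
  rfl

theorem eq_and_eq_of_comp_eq {a b a' b' : G.E} (h : G.s a = G.r b) (h' : G.s a' = G.r b')
    (hd : G.deg a = G.deg a') (he : G.comp a b h = G.comp a' b' h') :
    a = a' ∧ b = b' := by
  have hdb : G.deg b = G.deg b' := by
    have h2 := G.deg_comp a' b' h'
    rw [← he, G.deg_comp, hd] at h2
    exact add_left_cancel h2
  obtain ⟨mn, -, huniq⟩ := G.factor (G.comp a b h) (G.deg a) (G.deg b) (G.deg_comp a b h)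
  have e1 : (a, b) = mn := huniq (a, b) ⟨h, rfl, rfl, rfl⟩
  have e2 : (a', b') = mn := huniq (a', b') ⟨h', he.symm, hd.symm, hdb.symm⟩
  exact Prod.ext_iff.1 (e1.trans e2.symm)

theorem eq_vId_of_deg_eq_zero {e : G.E} (hd : G.deg e = 0) : e = G.vId (G.r e) := by
  obtain ⟨mn, -, huniq⟩ := G.factor e 0 0 (by rw [hd, add_zero])
  have h1 : G.s (G.vId (G.r e)) = G.r e := G.s_vId _
  have e1 : (G.vId (G.r e), e) = mn := huniq _ ⟨h1, G.id_comp e h1, G.deg_vId _, hd⟩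
  have h2 : G.s e = G.r (G.vId (G.s e)) := (G.r_vId _).symm
  have e2 : (e, G.vId (G.s e)) = mn := huniq _ ⟨h2, G.comp_id e h2, hd, G.deg_vId _⟩
  exact congrArg Prod.fst (e2.trans e1.symm)

theorem InfPath.ext {x y : G.InfPath} (h : ∀ n, x.seg n = y.seg n) : x = y := by
  cases x; cases y
  simp only [InfPath.mk.injEq]
  exact funext h

theorem DiagSeq.ext {z z' : G.DiagSeq} (h : ∀ n, z.edge n = z'.edge n) : z = z' := by
  cases z; cases z'
  simp only [DiagSeq.mk.injEq]
  exact funext h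

def maxCoord (n : Fin k → ℕ) : ℕ := Finset.univ.sup n

theorem le_maxCoord (n : Fin k → ℕ) (i : Fin k) : n i ≤ maxCoord n :=
  Finset.le_sup (Finset.mem_univ i)

namespace InfPath

noncomputable def toDiagSeq (x : G.InfPath) : G.DiagSeq where
  edge n := (x.compat (fun _ => n) (fun _ => 1)).choose
  deg_edge n := by
    obtain ⟨h, hc⟩ := (x.compat (fun _ => n) (fun _ => 1)).choose_spec
    have hdeg := G.deg_comp _ _ h
    rw [hc, x.deg_seg, x.deg_seg] at hdeg
    funext i
    simpa using (congrFun hdeg i).symm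
  comp_edge n := by
    obtain ⟨h, hc⟩ := (x.compat (fun _ => n) (fun _ => 1)).choose_spec
    obtain ⟨h', -⟩ := (x.compat (fun _ => n + 1) (fun _ => 1)).choose_spec
    have hs := G.s_comp _ _ h
    rw [hc] at hs
    exact hs.symm.trans h'

theorem comp_toDiagSeq_edge (x : G.InfPath) (n : ℕ) :
    ∃ h : G.s (x.seg (fun _ => n)) = G.r (x.toDiagSeq.edge n),
      G.comp (x.seg (fun _ => n)) (x.toDiagSeq.edge n) h = x.seg (fun _ => n + 1) :=
  (x.compat (fun _ => n) (fun _ => 1)).choose_spec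

end InfPath

namespace DiagSeq

noncomputable def pathToAux (z : G.DiagSeq) : (n : ℕ) → {e : G.E // G.s e = G.r (z.edge n)}
  | 0 => ⟨G.vId (G.r (z.edge 0)), G.s_vId _⟩
  | n + 1 => ⟨G.comp (pathToAux z n).1 (z.edge n) (pathToAux z n).2,
      by rw [G.s_comp]; exact z.comp_edge n⟩

noncomputable def pathTo (z : G.DiagSeq) (n : ℕ) : G.E := (z.pathToAux n).1

theorem s_pathTo (z : G.DiagSeq) (n : ℕ) : G.s (z.pathTo n) = G.r (z.edge n) :=
  (z.pathToAux n).2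

theorem pathTo_succ (z : G.DiagSeq) (n : ℕ) :
    z.pathTo (n + 1) = G.comp (z.pathTo n) (z.edge n) (z.s_pathTo n) := rfl

theorem deg_pathTo (z : G.DiagSeq) (n : ℕ) : G.deg (z.pathTo n) = fun _ => n := by
  induction n with
  | zero => exact G.deg_vId _
  | succ n ih =>
    rw [pathTo_succ, G.deg_comp, ih, z.deg_edge]
    rfl

theorem exists_comp_pathTo_eq_pathTo_add (z : G.DiagSeq) (n t : ℕ) :
    ∃ (ρ : G.E) (h : G.s (z.pathTo n) = G.r ρ), G.comp (z.pathTo n) ρ h = z.pathTo (n + t) := by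
  induction t with
  | zero => exact ⟨G.vId (G.s (z.pathTo n)), (G.r_vId _).symm, G.comp_id _ _⟩
  | succ t ih =>
    obtain ⟨ρ, h, hc⟩ := ih
    have hs : G.s ρ = G.r (z.edge (n + t)) := by
      have := G.s_comp _ _ h
      rw [hc, s_pathTo] at this
      exact this.symm
    refine ⟨G.comp ρ (z.edge (n + t)) hs, by rw [G.r_comp]; exact h, ?_⟩
    rw [← G.comp_assoc _ _ _ h hs (by rw [hc]; exact z.s_pathTo (n + t)),
      ← Nat.add_assoc, pathTo_succ]
    exact comp_congr hc rfl _ _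

theorem deg_pathTo_maxCoord (z : G.DiagSeq) (n : Fin k → ℕ) :
    G.deg (z.pathTo (maxCoord n)) = n + fun i => maxCoord n - n i := by
  rw [deg_pathTo]
  funext i
  exact (Nat.add_sub_cancel' (le_maxCoord n i)).symm

noncomputable def segOf (z : G.DiagSeq) (n : Fin k → ℕ) : G.E :=
  (G.factor _ n _ (z.deg_pathTo_maxCoord n)).choose.1

theorem deg_segOf (z : G.DiagSeq) (n : Fin k → ℕ) : G.deg (z.segOf n) = n :=
  (G.factor _ n _ (z.deg_pathTo_maxCoord n)).choose_spec.1.2.2.1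

theorem exists_comp_segOf_eq_pathTo (z : G.DiagSeq) (n : Fin k → ℕ) (m : ℕ)
    (hm : ∀ i, n i ≤ m) :
    ∃ (ν : G.E) (h : G.s (z.segOf n) = G.r ν), G.comp (z.segOf n) ν h = z.pathTo m := by
  obtain ⟨ν, h, hc⟩ : ∃ (ν : G.E) (h : G.s (z.segOf n) = G.r ν),
      G.comp (z.segOf n) ν h = z.pathTo (maxCoord n) :=
    let ⟨h, hc, _⟩ := (G.factor _ n _ (z.deg_pathTo_maxCoord n)).choose_spec.1
    ⟨_, h, hc⟩
  have hbm : maxCoord n ≤ m := Finset.sup_le fun i _ => hm i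
  obtain ⟨ρ, hρ, hcρ⟩ := z.exists_comp_pathTo_eq_pathTo_add (maxCoord n) (m - maxCoord n)
  rw [Nat.add_sub_cancel' hbm] at hcρ
  have hνρ : G.s ν = G.r ρ := by
    have := G.s_comp _ _ h
    rw [hc] at this
    rw [this] at hρ
    exact hρ
  refine ⟨G.comp ν ρ hνρ, by rw [G.r_comp]; exact h, ?_⟩
  rw [← G.comp_assoc _ _ _ h hνρ (by rw [hc]; exact hρ), ← hcρ]
  exact comp_congr hc rfl _ _

theorem eq_segOf_of_comp_eq_pathTo (z : G.DiagSeq) (n : Fin k → ℕ) (m : ℕ)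
    (hm : ∀ i, n i ≤ m) {μ ν : G.E} (h : G.s μ = G.r ν) (hc : G.comp μ ν h = z.pathTo m)
    (hd : G.deg μ = n) : μ = z.segOf n := by
  obtain ⟨ν', h', hc'⟩ := z.exists_comp_segOf_eq_pathTo n m hm
  exact (eq_and_eq_of_comp_eq h h' (by rw [hd, deg_segOf]) (hc.trans hc'.symm)).1

theorem segOf_const (z : G.DiagSeq) (m : ℕ) : z.segOf (fun _ => m) = z.pathTo m :=
  (z.eq_segOf_of_comp_eq_pathTo _ m (fun _ => le_rfl) (G.r_vId _).symm (G.comp_id _ _)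
    (z.deg_pathTo m)).symm

theorem exists_comp_segOf_eq_segOf_add (z : G.DiagSeq) (n m : Fin k → ℕ) :
    ∃ (μ : G.E) (h : G.s (z.segOf n) = G.r μ), G.comp (z.segOf n) μ h = z.segOf (n + m) := by
  set M := maxCoord (n + m)
  obtain ⟨ν, h, hc⟩ := z.exists_comp_segOf_eq_pathTo (n + m) M (le_maxCoord (n + m))
  obtain ⟨⟨a, b⟩, ⟨hab, habc, hda, -⟩, -⟩ :=
    G.factor (z.segOf (n + m)) n m (by rw [deg_segOf])
  have hbν : G.s b = G.r ν := by
    have := G.s_comp _ _ hab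
    rw [habc] at this
    rw [this] at h
    exact h
  have hfac : G.comp a (G.comp b ν hbν) (by rw [G.r_comp]; exact hab) = z.pathTo M := by
    rw [← G.comp_assoc _ _ _ hab hbν (by rw [habc]; exact h), ← hc]
    exact comp_congr habc rfl _ _
  have ha : a = z.segOf n := z.eq_segOf_of_comp_eq_pathTo n M
    (fun i => (Nat.le_add_right _ _).trans (le_maxCoord (n + m) i)) _ hfac hda
  refine ⟨b, ha ▸ hab, ?_⟩
  rw [← habc]
  exact comp_congr ha.symm rfl _ _

noncomputable def toInfPath (z : G.DiagSeq) : G.InfPath where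
  seg := z.segOf
  deg_seg := z.deg_segOf
  compat := z.exists_comp_segOf_eq_segOf_add

theorem pathTo_congr {z z' : G.DiagSeq} (m : ℕ) (h : ∀ i ≤ m, z.edge i = z'.edge i) :
    z.pathTo m = z'.pathTo m := by
  induction m with
  | zero => exact congrArg (fun e => G.vId (G.r e)) (h 0 le_rfl)
  | succ m ih =>
    rw [pathTo_succ, pathTo_succ]
    exact comp_congr (ih fun i hi => h i (Nat.le_succ_of_le hi)) (h m (Nat.le_succ m)) _ _

theorem segOf_congr {z z' : G.DiagSeq} (n : Fin k → ℕ)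
    (h : ∀ i ≤ maxCoord n, z.edge i = z'.edge i) : z.segOf n = z'.segOf n := by
  obtain ⟨ν, hν, hc⟩ := z.exists_comp_segOf_eq_pathTo n _ (le_maxCoord n)
  refine z'.eq_segOf_of_comp_eq_pathTo n _ (le_maxCoord n) hν ?_ (z.deg_segOf n)
  rw [hc]
  exact pathTo_congr _ h

theorem continuous_toInfPath :
    @Continuous _ _ G.diagTop G.infPathTop (toInfPath : G.DiagSeq → G.InfPath) := by
  let _ : TopologicalSpace G.DiagSeq := G.diagTop
  refine continuous_generateFrom_iff.2 ?_
  rintro _ ⟨l, rfl⟩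
  refine isOpen_iff_forall_mem_open.2 fun z hz =>
    ⟨{z' | ∀ i < maxCoord (G.deg l) + 1, z'.edge i = z.edge i}, fun z' hz' => ?_,
      TopologicalSpace.GenerateOpen.basic _ ⟨_, z.edge, rfl⟩, fun _ _ => rfl⟩
  show z'.segOf (G.deg l) = l
  rw [segOf_congr _ fun i hi => hz' i (Nat.lt_succ_of_le hi)]
  exact hz

end DiagSeq

theorem pathTo_toDiagSeq (x : G.InfPath) (m : ℕ) : x.toDiagSeq.pathTo m = x.seg (fun _ => m) := by
  induction m with
  | zero =>
    obtain ⟨h, -⟩ := x.comp_toDiagSeq_edge 0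
    show G.vId (G.r (x.toDiagSeq.edge 0)) = _
    rw [← h, eq_vId_of_deg_eq_zero (x.deg_seg (fun _ => 0) : G.deg (x.seg fun _ => 0) = 0), G.s_vId]
  | succ m ih =>
    obtain ⟨h, hc⟩ := x.comp_toDiagSeq_edge m
    rw [DiagSeq.pathTo_succ, ← hc]
    exact comp_congr ih rfl _ _

theorem toInfPath_toDiagSeq (x : G.InfPath) : x.toDiagSeq.toInfPath = x := by
  refine InfPath.ext fun n => (?_ : x.seg n = x.toDiagSeq.segOf n).symm
  obtain ⟨μ, hμ, hc⟩ := x.compat n (fun i => maxCoord n - n i)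
  have hdiag : (n + fun i => maxCoord n - n i) = fun _ => maxCoord n := by
    funext i
    exact Nat.add_sub_cancel' (le_maxCoord n i)
  refine x.toDiagSeq.eq_segOf_of_comp_eq_pathTo n _ (le_maxCoord n) hμ ?_ (x.deg_seg n)
  rw [hc, hdiag, pathTo_toDiagSeq]

theorem toDiagSeq_toInfPath (z : G.DiagSeq) : z.toInfPath.toDiagSeq = z := by
  refine DiagSeq.ext fun n => ?_
  obtain ⟨h, hc⟩ := z.toInfPath.comp_toDiagSeq_edge n
  have hn : z.toInfPath.seg (fun _ => n) = z.pathTo n := z.segOf_const n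
  have hs : G.s (z.pathTo n) = G.r (z.toInfPath.toDiagSeq.edge n) := hn ▸ h
  have hc' : G.comp (z.pathTo n) (z.toInfPath.toDiagSeq.edge n) hs = z.pathTo (n + 1) := by
    rw [← z.segOf_const (n + 1)]
    exact (comp_congr hn.symm rfl _ _).trans hc
  exact (eq_and_eq_of_comp_eq hs (z.s_pathTo n) rfl (hc'.trans (z.pathTo_succ n))).2

noncomputable def diagEquiv : G.InfPath ≃ G.DiagSeq where
  toFun := InfPath.toDiagSeq
  invFun := DiagSeq.toInfPath
  left_inv := toInfPath_toDiagSeq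
  right_inv := toDiagSeq_toInfPath

end KGraph

open KGraph

theorem stmt13_general {k : ℕ} (G : KGraph k) :
    ∃ i : G.InfPath ≃ G.DiagSeq,
      (∀ (x : G.InfPath) (n : ℕ),
        ∃ h : G.s (x.seg (fun _ => n)) = G.r ((i x).edge n),
          G.comp (x.seg (fun _ => n)) ((i x).edge n) h = x.seg (fun _ => n + 1)) ∧
      @Continuous _ _ G.diagTop G.infPathTop i.symm :=
  ⟨diagEquiv, InfPath.comp_toDiagSeq_edge, DiagSeq.continuous_toInfPath⟩

/-- For a row-finite `k`-graph `Λ` with no sources, the map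
`i : Λ^∞ → E^∞` to the infinite path space of the diagonal `1`-graph, determined by
`α(i(x)(j,l)) = x(jp, lp)` — i.e. `x(0,np) · i(x)ₙ = x(0,(n+1)p)` where `p = (1,…,1)` —
is a bijection, and `i⁻¹` is continuous for the cylinder-set topologies. -/
theorem stmt13 {k : ℕ} (G : KGraph k) (hrf : G.RowFinite) (hns : G.NoSources) :
    ∃ i : G.InfPath ≃ G.DiagSeq,
      (∀ (x : G.InfPath) (n : ℕ),
        ∃ h : G.s (x.seg (fun _ => n)) = G.r ((i x).edge n),
          G.comp (x.seg (fun _ => n)) ((i x).edge n) h = x.seg (fun _ => n + 1)) ∧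
      @Continuous _ _ G.diagTop G.infPathTop i.symm :=
  stmt13_general G
end

section
/- Let Λ be a row-finite k-graph with no sources such that each T_v in a Λ-system of maps (T,σ) is a complete metric space, and suppose for some c < 1 each σ_λ has Lipschitz constant at most c^{|d(λ)|}. Then for n, m ∈ ℕᵏ the set maps σ̃ⁿ and σ̃ᵐ on ∏_v C(T_v), defined by σ̃ⁿ(C)_v = ⋃_{λ∈vΛⁿ} σ_λ(C_{s(λ)}), commute: σ̃ⁿ ∘ σ̃ᵐ = σ̃ᵐ ∘ σ̃ⁿ. -/
open KGraph

/-- The map `σ̃ⁿ` on families of subsets of the bundle `T`: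
`σ̃ⁿ(C)_v = ⋃_{λ ∈ vΛⁿ} σ_λ(C_{s(λ)})`. -/
def KGraph.tilde {k : ℕ} (G : KGraph k) {T : Type*} (σ : G.E → T → T)
    (n : Fin k → ℕ) (C : G.V → Set T) : G.V → Set T :=
  fun v => ⋃ l ∈ {l : G.E | G.r l = v ∧ G.deg l = n}, σ l '' C (G.s l)

/-- For a `Λ`-system of maps on complete metric fibers with Lipschitz
constants `c^{|d(λ)|}` (`c < 1`), the maps `σ̃ⁿ` and `σ̃ᵐ` on families of nonempty bounded
closed subsets of the fibers commute: `σ̃ⁿ(σ̃ᵐ(C)) = σ̃ᵐ(σ̃ⁿ(C))`. -/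
theorem stmt17 {k : ℕ} (G : KGraph k) (hrf : G.RowFinite) (hns : G.NoSources)
    {T : Type*} [MetricSpace T]
    (π : T → G.V) (σ : G.E → T → T)
    (hπσ : ∀ (l : G.E) (t : T), π t = G.s l → π (σ l t) = G.r l)
    (hcomp : ∀ (l m : G.E) (h : G.s l = G.r m) (t : T), π t = G.s m →
      σ (G.comp l m h) t = σ l (σ m t))
    (hid : ∀ (v : G.V) (t : T), π t = v → σ (G.vId v) t = t)
    (hfib : ∀ v : G.V, IsComplete {t : T | π t = v})
    (c : ℝ) (hc : c < 1)
    (hlip : ∀ (l : G.E) (t t' : T), π t = G.s l → π t' = G.s l →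
      dist (σ l t) (σ l t') ≤ c ^ (∑ i, G.deg l i) * dist t t')
    (C : G.V → Set T) (hCfib : ∀ v : G.V, C v ⊆ {t : T | π t = v})
    (hC : ∀ v : G.V, (C v).Nonempty ∧ Bornology.IsBounded (C v) ∧ IsClosed (C v))
    (n m : Fin k → ℕ) :
    G.tilde σ n (G.tilde σ m C) = G.tilde σ m (G.tilde σ n C) := by
  have key : ∀ (n m : Fin k → ℕ) (v : G.V) (t : T),
      t ∈ G.tilde σ n (G.tilde σ m C) v → t ∈ G.tilde σ m (G.tilde σ n C) v := by
    intro n m v t ht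
    simp only [KGraph.tilde, Set.mem_iUnion, Set.mem_image, Set.mem_setOf_eq] at ht ⊢
    obtain ⟨l, ⟨hrl, hdl⟩, s1, ⟨μ, ⟨hrμ, hdμ⟩, u, hu, rfl⟩, rfl⟩ := ht
    have h : G.s l = G.r μ := hrμ.symm
    have hπu : π u = G.s μ := hCfib _ hu
    have e1 : σ (G.comp l μ h) u = σ l (σ μ u) := hcomp l μ h u hπu
    obtain ⟨⟨μ', l'⟩, ⟨h', hc', hd1, hd2⟩, -⟩ :=
      G.factor (G.comp l μ h) m n (by rw [G.deg_comp, hdl, hdμ, add_comm])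
    have hs2 : G.s l' = G.s μ := by
      have h3 := G.s_comp μ' l' h'
      rw [hc'] at h3
      rw [← h3, G.s_comp]
    have e2 : σ (G.comp l μ h) u = σ μ' (σ l' u) := by
      rw [← hc']; exact hcomp μ' l' h' u (by rw [hπu, ← hs2])
    exact ⟨μ', ⟨by rw [← G.r_comp μ' l' h', hc', G.r_comp, hrl], hd1⟩,
      σ l' u, ⟨l', ⟨h'.symm, hd2⟩, u, by rw [hs2]; exact hu, rfl⟩, by rw [← e2, e1]⟩
  funext v
  exact Set.Subset.antisymm (fun t ht => key n m v t ht) (fun t ht => key m n v t ht)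
end
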